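/- arXiv:2605.04377 — 2 statements merged into one kernel-verified Lean document; each statement's English description precedes it below -/
import Mathlib

section
/- Let T > 0 and let g : ℝ → ℝ be continuous with g(0) = 0, and suppose g has derivative d at 0 with d < 0. If no t' ∈ (0, T) is an upward zero-crossing of g, then g(t) ≤ 0 for all t ∈ [0, T]. -/
/-!
Since `g' 0 < 0`, `g` is negative at some `s > 0`. If it were positive at some `t ≤ T`,
let `z` be the infimum of the times in `[s, t]` where `g > 0`, and `a` the supremum of the times
in `[s, z]` where `g < 0`. Continuity forces `g = 0` on `[a, z]`, so `z ∈ (0, T)` is an upward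
zero-crossing.
-/

/-- `z` is an upward (negative-to-positive) zero-crossing of `f`. -/
def IsUpCrossing (f : ℝ → ℝ) (z : ℝ) : Prop :=
  ∃ a : ℝ, a ≤ z ∧
    (∀ t ∈ Set.Icc a z, f t = 0) ∧
    (∀ ε > 0, ∃ t ∈ Set.Ico (a - ε) a, f t < 0) ∧
    (∀ ε > 0, ∃ t ∈ Set.Ioc z (z + ε), f t > 0)

open Set Filter Topology

theorem HasDerivAt.eventually_lt_of_deriv_neg {f : ℝ → ℝ} {f' x : ℝ} (hf : HasDerivAt f f' x)
    (hf' : f' < 0) : ∀ᶠ t in 𝓝[>] x, f t < f x := by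
  filter_upwards [hf.hasDerivWithinAt.limsup_slope_le' (lt_irrefl x) hf',
    self_mem_nhdsWithin] with t hslope (hxt : x < t)
  rw [slope_def_field, div_neg_iff] at hslope
  rcases hslope with ⟨-, hden⟩ | ⟨hnum, -⟩
  · linarith
  · linarith

section Crossing

variable {f : ℝ → ℝ} {s t : ℝ}

theorem exists_zero_nonpos_before_pos_after (hf : Continuous f) (hst : s ≤ t) (hs : f s < 0)
    (ht : 0 < f t) :
    ∃ z ∈ Ioo s t, f z = 0 ∧ (∀ u ∈ Icc s z, f u ≤ 0) ∧
      ∀ ε > 0, ∃ u ∈ Ioc z (z + ε), f u > 0 := by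
  set P := {u ∈ Icc s t | 0 < f u}
  have hPne : P.Nonempty := ⟨t, ⟨⟨hst, le_rfl⟩, ht⟩⟩
  have hPbdd : BddBelow P := ⟨s, fun u hu => hu.1.1⟩
  set z := sInf P
  have hsz : s ≤ z := le_csInf hPne fun u hu => hu.1.1
  have hzt : z ≤ t := csInf_le hPbdd ⟨⟨hst, le_rfl⟩, ht⟩
  have hbefore : ∀ u ∈ Ico s z, f u ≤ 0 := fun u hu => by
    by_contra! hpos
    exact (csInf_le hPbdd ⟨⟨hu.1, hu.2.le.trans hzt⟩, hpos⟩).not_gt hu.2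
  have hz_nonneg : 0 ≤ f z :=
    closure_minimal (fun u hu => hu.2.le) (isClosed_le continuous_const hf)
      (csInf_mem_closure hPne hPbdd)
  have hsz' : s < z := hsz.lt_of_ne fun h => by rw [h] at hs; linarith
  have hz_nonpos : f z ≤ 0 :=
    closure_minimal hbefore (isClosed_le hf continuous_const)
      (by rw [closure_Ico hsz'.ne]; exact ⟨hsz, le_rfl⟩)
  have hz : f z = 0 := le_antisymm hz_nonpos hz_nonneg
  have hzt' : z < t := hzt.lt_of_ne fun h => by rw [h] at hz; linarith
  refine ⟨z, ⟨hsz', hzt'⟩, hz, fun u hu => ?_, fun ε hε => ?_⟩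
  · rcases hu.2.lt_or_eq with hlt | rfl
    · exact hbefore u ⟨hu.1, hlt⟩
    · exact hz_nonpos
  · obtain ⟨u, hu, huz⟩ := exists_lt_of_csInf_lt hPne (lt_add_of_pos_right z hε)
    have hzu : z < u := (csInf_le hPbdd hu).lt_of_ne fun h => by rw [← h] at hu; linarith [hu.2]
    exact ⟨u, ⟨hzu, huz.le⟩, hu.2⟩

theorem exists_zero_run_after_neg {z : ℝ} (hf : Continuous f) (hsz : s ≤ z) (hs : f s < 0)
    (hz : f z = 0) (hnonpos : ∀ u ∈ Icc s z, f u ≤ 0) :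
    ∃ a ≤ z, (∀ u ∈ Icc a z, f u = 0) ∧ ∀ ε > 0, ∃ u ∈ Ico (a - ε) a, f u < 0 := by
  set N := {u ∈ Icc s z | f u < 0}
  have hNne : N.Nonempty := ⟨s, ⟨⟨le_rfl, hsz⟩, hs⟩⟩
  have hNbdd : BddAbove N := ⟨z, fun u hu => hu.1.2⟩
  set a := sSup N
  have hsa : s ≤ a := le_csSup hNbdd ⟨⟨le_rfl, hsz⟩, hs⟩
  have haz : a ≤ z := csSup_le hNne fun u hu => hu.1.2
  have hafter : ∀ u ∈ Ioc a z, f u = 0 := fun u hu => by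
    refine le_antisymm (hnonpos u ⟨hsa.trans hu.1.le, hu.2⟩) ?_
    by_contra! hneg
    exact (le_csSup hNbdd ⟨⟨hsa.trans hu.1.le, hu.2⟩, hneg⟩).not_gt hu.1
  have ha : f a = 0 := by
    rcases haz.lt_or_eq with hlt | heq
    · exact closure_minimal hafter (isClosed_eq hf continuous_const)
        (by rw [closure_Ioc hlt.ne]; exact ⟨le_rfl, haz⟩)
    · rwa [heq]
  refine ⟨a, haz, fun u hu => ?_, fun ε hε => ?_⟩
  · rcases hu.1.eq_or_lt with rfl | hlt
    · exact ha
    · exact hafter u ⟨hlt, hu.2⟩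
  · obtain ⟨u, hu, hau⟩ := exists_lt_of_lt_csSup hNne (sub_lt_self a hε)
    have hua : u < a := (le_csSup hNbdd hu).lt_of_ne fun h => by rw [h] at hu; linarith [hu.2]
    exact ⟨u, ⟨hau.le, hua⟩, hu.2⟩

theorem exists_isUpCrossing_mem_Ioo (hf : Continuous f) (hst : s ≤ t) (hs : f s < 0)
    (ht : 0 < f t) : ∃ z ∈ Ioo s t, IsUpCrossing f z := by
  obtain ⟨z, hz_mem, hz, hnonpos, hright⟩ := exists_zero_nonpos_before_pos_after hf hst hs ht
  obtain ⟨a, haz, hzero, hleft⟩ := exists_zero_run_after_neg hf hz_mem.1.le hs hz hnonpos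
  exact ⟨z, hz_mem, a, haz, hzero, hleft, hright⟩

end Crossing

theorem stmt_11_general (T : ℝ) (g : ℝ → ℝ) (hg : Continuous g)
    (hg0 : g 0 = 0) (d : ℝ) (hd : HasDerivAt g d 0) (hdneg : d < 0)
    (hnoZC : ∀ t' ∈ Set.Ioo (0 : ℝ) T, ¬ IsUpCrossing g t') :
    ∀ t ∈ Set.Icc (0 : ℝ) T, g t ≤ 0 := by
  intro t ht
  by_contra! hpos
  have ht0 : 0 < t := ht.1.lt_of_ne (by rintro rfl; linarith)
  obtain ⟨s, hs, hs0, hst⟩ :=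
    ((hd.eventually_lt_of_deriv_neg hdneg).and (Ioo_mem_nhdsGT ht0)).exists
  obtain ⟨z, hz, hcross⟩ := exists_isUpCrossing_mem_Ioo hg hst.le (hg0 ▸ hs) hpos
  exact hnoZC z ⟨hs0.trans hz.1, hz.2.trans_le ht.2⟩ hcross

theorem stmt_11 (T : ℝ) (hT : 0 < T) (g : ℝ → ℝ) (hg : Continuous g)
    (hg0 : g 0 = 0) (d : ℝ) (hd : HasDerivAt g d 0) (hdneg : d < 0)
    (hnoZC : ∀ t' ∈ Set.Ioo (0 : ℝ) T, ¬ IsUpCrossing g t') :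
    ∀ t ∈ Set.Icc (0 : ℝ) T, g t ≤ 0 :=
  stmt_11_general T g hg hg0 d hd hdneg hnoZC
end

section
/- Let n ≥ 1 and let g₁, …, gₙ : ℝ → ℝ be continuous. Let t_r > 0 and suppose t_r is a first upward zero-crossing of the family, i.e., there exists i such that t_r is an upward zero-crossing of gᵢ, and for every t' ∈ (0, t_r) and every j, t' is not an upward zero-crossing of gⱼ. Then (1) gᵢ(t_r) = 0 for the triggering index i, and (2) for every index j such that gⱼ(0) < 0, or gⱼ(0) = 0 and gⱼ has strictly negative derivative at 0, we have gⱼ(t) ≤ 0 for all t ∈ [0, t_r]. -/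
/-- A guard is active at time `0` if it starts strictly negative, or starts at zero
with strictly negative time derivative. -/
def ActiveAtZero (g : ℝ → ℝ) : Prop :=
  g 0 < 0 ∨ (g 0 = 0 ∧ ∃ d < (0 : ℝ), HasDerivAt g d 0)

/-!
An active guard is negative immediately after time `0`. If it were positive at some
`t ∈ [0, t_r]`, pick `s ∈ (0, t)` where it is negative; with `a` the supremum of the times in
`[s, t]` where it is negative and `z` the infimum of the times in `[a, t]` where it is
positive, the guard vanishes on `[a, z]`, so `z ∈ (0, t_r)` is an upward zero-crossing,
contradicting minimality of `t_r`.
-/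

open Set Filter Topology

lemma HasDerivAt.eventually_nhdsGT_lt_of_neg {f : ℝ → ℝ} {d x : ℝ} (hf : HasDerivAt f d x)
    (hd : d < 0) : ∀ᶠ y in 𝓝[>] x, f y < f x := by
  filter_upwards [(hasDerivAt_iff_tendsto_slope_left_right.mp hf).2.eventually_lt_const hd,
    self_mem_nhdsWithin] with y hslope hxy
  exact (slope_neg_iff_of_le (le_of_lt hxy)).mp hslope

lemma ActiveAtZero.nonpos {g : ℝ → ℝ} (hg : ActiveAtZero g) : g 0 ≤ 0 :=
  hg.elim le_of_lt fun h => h.1.le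

lemma ActiveAtZero.eventually_neg {g : ℝ → ℝ} (hg : ActiveAtZero g) (hc : ContinuousAt g 0) :
    ∀ᶠ t in 𝓝[>] 0, g t < 0 := by
  rcases hg with hneg | ⟨hzero, d, hd, hderiv⟩
  · exact nhdsWithin_le_nhds (hc.eventually_lt continuousAt_const hneg)
  · simpa [hzero] using hderiv.eventually_nhdsGT_lt_of_neg hd

section Crossing

variable {f : ℝ → ℝ}

lemma exists_zero_after_last_neg (hf : Continuous f) {s t : ℝ} (hst : s ≤ t) (hs : f s < 0)
    (ht : 0 < f t) :
    ∃ a ∈ Ioo s t, f a = 0 ∧ (∀ ε > 0, ∃ u ∈ Ico (a - ε) a, f u < 0) ∧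
      ∀ u ∈ Icc a t, 0 ≤ f u := by
  set N := {u ∈ Icc s t | f u < 0}
  have hsN : s ∈ N := ⟨left_mem_Icc.2 hst, hs⟩
  have hN : IsLUB N (sSup N) := isLUB_csSup ⟨s, hsN⟩ ⟨t, fun u hu => hu.1.2⟩
  set a := sSup N
  have hsa : s ≤ a := hN.1 hsN
  have hat : a ≤ t := hN.2 fun u hu => hu.1.2
  have hnonneg_after : ∀ u ∈ Ioc a t, 0 ≤ f u := fun u hu =>
    not_lt.1 fun hneg => hu.1.not_ge (hN.1 ⟨⟨hsa.trans hu.1.le, hu.2⟩, hneg⟩)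
  have hfa_nonpos : f a ≤ 0 :=
    closure_minimal (fun u hu => hu.2.le) (isClosed_le hf continuous_const)
      (hN.mem_closure ⟨s, hsN⟩)
  have hat' : a < t := hat.lt_of_ne fun h => (h ▸ hfa_nonpos).not_gt ht
  have hfa : f a = 0 := by
    refine le_antisymm hfa_nonpos (closure_minimal hnonneg_after
      (isClosed_le continuous_const hf) ?_)
    rw [closure_Ioc hat'.ne]
    exact left_mem_Icc.2 hat
  refine ⟨a, ⟨hsa.lt_of_ne fun h => hs.ne (h ▸ hfa), hat'⟩, hfa, fun ε hε => ?_, fun u hu => ?_⟩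
  · obtain ⟨u, hu, hau, hua⟩ := hN.exists_between_sub_self' (fun ha => ha.2.ne hfa) hε
    exact ⟨u, ⟨hau.le, hua⟩, hu.2⟩
  · rcases hu.1.eq_or_lt with rfl | h
    · exact hfa.ge
    · exact hnonneg_after u ⟨h, hu.2⟩

lemma exists_zero_Icc_before_first_pos (hf : Continuous f) {a t : ℝ} (hat : a ≤ t)
    (ha : f a = 0) (hnonneg : ∀ u ∈ Icc a t, 0 ≤ f u) (ht : 0 < f t) :
    ∃ z ∈ Ico a t, (∀ u ∈ Icc a z, f u = 0) ∧ ∀ ε > 0, ∃ u ∈ Ioc z (z + ε), 0 < f u := by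
  set P := {u ∈ Icc a t | 0 < f u}
  have htP : t ∈ P := ⟨right_mem_Icc.2 hat, ht⟩
  have hP : IsGLB P (sInf P) := isGLB_csInf ⟨t, htP⟩ ⟨a, fun u hu => hu.1.1⟩
  set z := sInf P
  have haz : a ≤ z := hP.2 fun u hu => hu.1.1
  have hzt : z ≤ t := hP.1 htP
  have hzero_before : ∀ u ∈ Ico a z, f u = 0 := fun u hu =>
    le_antisymm (not_lt.1 fun hpos => hu.2.not_ge (hP.1 ⟨⟨hu.1, hu.2.le.trans hzt⟩, hpos⟩))
      (hnonneg u ⟨hu.1, hu.2.le.trans hzt⟩)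
  have hfz : f z = 0 := by
    rcases haz.eq_or_lt with h | h
    · exact h ▸ ha
    · refine closure_minimal hzero_before (isClosed_eq hf continuous_const) ?_
      rw [closure_Ico h.ne]
      exact right_mem_Icc.2 haz
  refine ⟨z, ⟨haz, hzt.lt_of_ne fun h => ht.ne' (h ▸ hfz)⟩, fun u hu => ?_, fun ε hε => ?_⟩
  · rcases hu.2.eq_or_lt with rfl | h
    · exact hfz
    · exact hzero_before u ⟨hu.1, h⟩
  · obtain ⟨u, hu, hzu, huz⟩ := hP.exists_between_self_add' (fun hz => hz.2.ne' hfz) hε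
    exact ⟨u, ⟨hzu, huz.le⟩, hu.2⟩

theorem exists_isUpCrossing_of_neg_of_pos (hf : Continuous f) {s t : ℝ} (hst : s ≤ t)
    (hs : f s < 0) (ht : 0 < f t) : ∃ z ∈ Ioo s t, IsUpCrossing f z := by
  obtain ⟨a, ⟨hsa, hat⟩, hfa, hleft, hnonneg⟩ := exists_zero_after_last_neg hf hst hs ht
  obtain ⟨z, ⟨haz, hzt⟩, hzero, hright⟩ :=
    exists_zero_Icc_before_first_pos hf hat.le hfa hnonneg ht
  exact ⟨z, ⟨hsa.trans_le haz, hzt⟩, a, haz, hzero, hleft, hright⟩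

end Crossing

theorem stmt_12_general (n : ℕ) (g : Fin n → ℝ → ℝ)
    (hg : ∀ j, Continuous (g j))
    (t_r : ℝ)
    (i : Fin n) (hi : IsUpCrossing (g i) t_r)
    (hfirst : ∀ t' ∈ Set.Ioo (0 : ℝ) t_r, ∀ j, ¬ IsUpCrossing (g j) t') :
    g i t_r = 0 ∧
      ∀ j, ActiveAtZero (g j) → ∀ t ∈ Set.Icc (0 : ℝ) t_r, g j t ≤ 0 := by
  refine ⟨?_, fun j hact t ht => ?_⟩
  · obtain ⟨a, hat, hzero, -, -⟩ := hi
    exact hzero t_r ⟨hat, le_rfl⟩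
  · by_contra! hpos
    have ht0 : 0 < t := ht.1.lt_of_ne (by rintro rfl; exact hpos.not_ge hact.nonpos)
    obtain ⟨s, hneg, hs⟩ :=
      ((hact.eventually_neg (hg j).continuousAt).and (Ioo_mem_nhdsGT ht0)).exists
    obtain ⟨z, hz, hcross⟩ := exists_isUpCrossing_of_neg_of_pos (hg j) hs.2.le hneg hpos
    exact hfirst z ⟨hs.1.trans hz.1, hz.2.trans_le ht.2⟩ j hcross

theorem stmt_12 (n : ℕ) (hn : 1 ≤ n) (g : Fin n → ℝ → ℝ)
    (hg : ∀ j, Continuous (g j))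
    (t_r : ℝ) (ht_r : 0 < t_r)
    (i : Fin n) (hi : IsUpCrossing (g i) t_r)
    (hfirst : ∀ t' ∈ Set.Ioo (0 : ℝ) t_r, ∀ j, ¬ IsUpCrossing (g j) t') :
    g i t_r = 0 ∧
      ∀ j, ActiveAtZero (g j) → ∀ t ∈ Set.Icc (0 : ℝ) t_r, g j t ≤ 0 :=
  stmt_12_general n g hg t_r i hi hfirst
end
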